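/- arXiv:2011.03169 — 2 statements merged into one kernel-verified Lean document; each statement's English description precedes it below -/
import Mathlib

section
/- Let G be a connected simple graph on a finite vertex set V such that for every vertex x, the subgraph of G induced on V \ {x} is connected (no single vertex disconnects G). Then for all vertices u and v, 2·dist(u,v) ≤ |V|; i.e., the diameter of such a graph is at most half the number of vertices. -/
/-!
Let `d = dist u v` and sort the vertices into the breadth-first layers `{y | dist u y = i}`.
Every walk from `u` to `v` meets each layer `i ≤ d`, since distances from `u` change by at most
one along an edge. For `0 < i < d` the layer has a vertex `a ∉ {u, v}`, and removing `a` leaves a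
walk from `u` to `v`, which meets the layer in a second vertex. The layers are disjoint, so
`|V| ≥ 1 + 2 (d - 1) + 1 = 2 d`.
-/

open Finset

lemma two_mul_le_sum_range_succ {f : ℕ → ℕ} {d : ℕ} (h0 : 1 ≤ f 0) (hd : 1 ≤ f d)
    (hmid : ∀ i, 0 < i → i < d → 2 ≤ f i) : 2 * d ≤ ∑ i ∈ range (d + 1), f i := by
  rcases d with _ | n
  · simp
  rw [sum_range_succ, sum_range_succ']
  have : ∑ _i ∈ range n, 2 ≤ ∑ i ∈ range n, f (i + 1) :=
    sum_le_sum fun i hi => hmid (i + 1) i.succ_pos (by simpa using hi)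
  simp only [sum_const, card_range, smul_eq_mul] at this
  omega

namespace SimpleGraph

variable {V : Type*} {G : SimpleGraph V}

lemma Walk.exists_mem_support_dist_eq {u v : V} (p : G.Walk u v) {i : ℕ}
    (hi : i ≤ G.dist u v) : ∃ y ∈ p.support, G.dist u y = i := by
  rcases Nat.eq_zero_or_pos i with rfl | hpos
  · exact ⟨u, p.start_mem_support, dist_self⟩
  obtain ⟨e, he, hfst, hsnd⟩ := p.exists_boundary_dart {y | G.dist u y < i}
    (by simpa using hpos) (by simpa using hi)
  simp only [Set.mem_ofPred_eq, not_lt] at hfst hsnd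
  have hstep := e.adj.reachable.dist_triangle_right u
  rw [dist_eq_one_iff_adj.mpr e.adj] at hstep
  exact ⟨e.snd, p.dart_snd_mem_support_of_mem_darts he, by omega⟩

lemma exists_walk_not_mem_support_of_induce_compl_connected {x u v : V}
    (h : (G.induce ({x}ᶜ : Set V)).Connected) (hu : u ≠ x) (hv : v ≠ x) :
    ∃ p : G.Walk u v, x ∉ p.support := by
  obtain ⟨q⟩ := h ⟨u, hu⟩ ⟨v, hv⟩
  let p : G.Walk u v := q.map (Embedding.induce _).toHom
  refine ⟨p, fun hx => ?_⟩
  obtain ⟨y, -, hy⟩ := List.mem_map.mp (q.support_map _ ▸ hx)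
  exact y.2 hy

lemma one_lt_card_filter_dist_eq [Fintype V] (h : ∀ x : V, (G.induce ({x}ᶜ : Set V)).Connected)
    {u v : V} {i : ℕ} (hi0 : 0 < i) (hi : i < G.dist u v) : 1 < #{y | G.dist u y = i} := by
  obtain ⟨p⟩ : G.Reachable u v := Reachable.of_dist_ne_zero (by omega)
  obtain ⟨a, -, ha⟩ := p.exists_mem_support_dist_eq hi.le
  have hau : u ≠ a := by rintro rfl; simp at ha; omega
  have hav : v ≠ a := by rintro rfl; omega
  obtain ⟨q, hq⟩ := exists_walk_not_mem_support_of_induce_compl_connected (h a) hau hav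
  obtain ⟨b, hb, hb'⟩ := q.exists_mem_support_dist_eq hi.le
  exact one_lt_card.mpr ⟨a, by simpa, b, by simpa, by rintro rfl; exact hq hb⟩

lemma sum_card_filter_dist_eq_le_card [Fintype V] (u : V) (n : ℕ) :
    ∑ i ∈ range n, #{y | G.dist u y = i} ≤ Fintype.card V := by
  rw [sum_card_fiberwise_eq_card_filter]
  exact card_le_univ _

end SimpleGraph

theorem two_mul_dist_le_card_general {V : Type*} [Fintype V] (G : SimpleGraph V)
    (h : ∀ x : V, (G.induce ({x}ᶜ : Set V)).Connected) (u v : V) :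
    2 * G.dist u v ≤ Fintype.card V :=
  calc 2 * G.dist u v ≤ ∑ i ∈ range (G.dist u v + 1), #{y | G.dist u y = i} :=
        two_mul_le_sum_range_succ (card_pos.mpr ⟨u, by simp⟩) (card_pos.mpr ⟨v, by simp⟩)
          fun _ hi0 hi => G.one_lt_card_filter_dist_eq h hi0 hi
    _ ≤ Fintype.card V := G.sum_card_filter_dist_eq_le_card u _

/-- If a connected simple graph on a finite vertex set remains connected after the removal
of any single vertex, then twice the distance between any two vertices is at most the
number of vertices: the diameter is at most half the number of vertices. -/
theorem two_mul_dist_le_card {V : Type*} [Fintype V] (G : SimpleGraph V)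
    (hG : G.Connected)
    (h : ∀ x : V, (G.induce ({x}ᶜ : Set V)).Connected) (u v : V) :
    2 * G.dist u v ≤ Fintype.card V :=
  two_mul_dist_le_card_general G h u v
end

section
/- Let G be a tree (a connected acyclic simple graph) and let a, b, r be vertices of G. Let p be the unique path from a to r and q the unique path from b to r. Then there exists a vertex m and a path s from m to r in G such that the set of vertices lying on both p and q is exactly the set of vertices of s. In other words, in tree routing the routes of two flows towards the common controller r share exactly one common path, which starts at some node m and ends at r. -/
open SimpleGraph

private lemma tree_aux {V : Type*} {G : SimpleGraph V} (hG : G.IsTree) :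
    ∀ {a r : V} (p : G.Walk a r), p.IsPath → ∀ {b : V} (q : G.Path b r),
    ∃ (m : V) (s : G.Path m r),
      {x : V | x ∈ p.support ∧ x ∈ q.1.support} = {x : V | x ∈ s.1.support} := by
  classical
  intro a r p
  induction p with
  | nil =>
    rename_i u
    intro _ b q
    refine ⟨u, SimpleGraph.Path.nil, ?_⟩
    ext x
    simp only [SimpleGraph.Path.nil, Set.mem_setOf_eq, SimpleGraph.Walk.support_nil,
      List.mem_singleton]
    constructor
    · exact fun hx => hx.1
    · rintro rfl
      exact ⟨rfl, SimpleGraph.Walk.end_mem_support q.1⟩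
  | cons h p' ih =>
    rename_i u v r'
    intro hp b q
    by_cases hu : u ∈ q.1.support
    · have hdrop : ((q.1.dropUntil u hu)).IsPath := q.2.dropUntil hu
      have huniq : (⟨SimpleGraph.Walk.cons h p', hp⟩ : G.Path u r') =
          ⟨q.1.dropUntil u hu, hdrop⟩ := hG.2.path_unique _ _
      have hsub : (SimpleGraph.Walk.cons h p').support ⊆ q.1.support := by
        have heq : (SimpleGraph.Walk.cons h p').support = (q.1.dropUntil u hu).support := by
          rw [congrArg (fun t : G.Path u r' => t.1.support) huniq]
        rw [heq]
        exact q.1.support_dropUntil_subset hu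
      refine ⟨u, ⟨SimpleGraph.Walk.cons h p', hp⟩, ?_⟩
      ext x
      simp only [Set.mem_setOf_eq]
      exact ⟨fun hx => hx.1, fun hx => ⟨hx, hsub hx⟩⟩
    · obtain ⟨m, s, hs⟩ := ih hp.of_cons q
      refine ⟨m, s, ?_⟩
      ext x
      simp only [Set.mem_setOf_eq, SimpleGraph.Walk.support_cons, List.mem_cons]
      constructor
      · rintro ⟨hx1 | hx1, hx2⟩
        · exact absurd (hx1 ▸ hx2) hu
        · exact (Set.ext_iff.mp hs x).mp ⟨hx1, hx2⟩
      · intro hx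
        obtain ⟨hx1, hx2⟩ := (Set.ext_iff.mp hs x).mpr hx
        exact ⟨Or.inr hx1, hx2⟩

/-- In tree routing, the routes of two flows towards the common controller `r` share
exactly one common path, which starts at some node `m` and ends at `r`: the set of
vertices lying on both the path `p` from `a` to `r` and the path `q` from `b` to `r`
is exactly the vertex set of a single path `s` from some vertex `m` to `r`. -/
theorem tree_routes_common_path {V : Type*} (G : SimpleGraph V) (hG : G.IsTree)
    (a b r : V) (p : G.Path a r) (q : G.Path b r) :
    ∃ (m : V) (s : G.Path m r),
      {x : V | x ∈ p.1.support ∧ x ∈ q.1.support} = {x : V | x ∈ s.1.support} := by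
  exact tree_aux hG p.1 p.2 q
end
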